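/- Let m ≥ 2, n ≥ 1, let p : Fin m → Fin n → ℕ be positive processing times, and suppose σ is a feasible sequence with p i (σ 0) = p (i+1) (σ (n−1)) for every i with i+1 < m. Then there exists a feasible sequence τ with Σ_{i=0}^{m−2} p i (τ 0) = min_{k} Σ_{i=0}^{m−2} p i (k), and τ is optimal: for every feasible sequence ρ, Σ_{i=0}^{m−2} p i (τ 0) + Σ_j p (m−1) (j) ≤ Σ_{i=0}^{m−2} p i (ρ 0) + Σ_j p (m−1) (j). -/

import Mathlib

/-- A sequence `σ` for an m-machine no-idle/no-wait flow shop instance is feasible if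
`p (i+1) (σ j) = p i (σ (j+1))` for every machine `i` with `i+1 < m` and every
position `j` with `j+1 < n`. -/
def FeasibleSeqM (m n : ℕ) (p : Fin m → Fin n → ℕ) (σ : Fin n ≃ Fin n) : Prop :=
  ∀ i : Fin m, ∀ hi : (i : ℕ) + 1 < m, ∀ j : Fin n, ∀ hj : (j : ℕ) + 1 < n,
    p ⟨(i : ℕ) + 1, hi⟩ (σ j) = p i (σ ⟨(j : ℕ) + 1, hj⟩)

/-! The condition on `σ` closes the feasibility chain into a cycle: position `n - 1` is followed
by position `0`. Every rotation of a cyclically feasible sequence is again cyclically feasible,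
so every job starts some feasible sequence. Since the makespan only depends on the first job,
starting with a job of minimal head time `Σ_{i<m-1} p i k` is optimal. -/

theorem Fin.mk_add_one_eq_add_one {n : ℕ} [NeZero n] {j : Fin n} (hj : (j : ℕ) + 1 < n) :
    (⟨(j : ℕ) + 1, hj⟩ : Fin n) = j + 1 :=
  Fin.ext (Fin.val_add_one_of_lt' hj).symm

section CyclicFeasibility

variable {m n : ℕ} [NeZero n] (p : Fin m → Fin n → ℕ)

def CyclicFeasibleSeqM (σ : Fin n ≃ Fin n) : Prop :=
  ∀ i : Fin m, ∀ hi : (i : ℕ) + 1 < m, ∀ j : Fin n,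
    p ⟨(i : ℕ) + 1, hi⟩ (σ j) = p i (σ (j + 1))

variable {p}

theorem cyclicFeasibleSeqM_of_feasibleSeqM {σ : Fin n ≃ Fin n} (hσ : FeasibleSeqM m n p σ)
    (hcyc : ∀ i : Fin m, ∀ hi : (i : ℕ) + 1 < m,
      p i (σ 0) = p ⟨(i : ℕ) + 1, hi⟩ (σ ⟨n - 1, Nat.sub_lt (NeZero.pos n) one_pos⟩)) :
    CyclicFeasibleSeqM p σ := by
  intro i hi j
  by_cases hj : (j : ℕ) + 1 < n
  · rw [hσ i hi j hj, Fin.mk_add_one_eq_add_one hj]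
  · have hj_eq : (j : ℕ) + 1 = n := by have := j.isLt; omega
    have hj_last : j = ⟨n - 1, Nat.sub_lt (NeZero.pos n) one_pos⟩ := by ext; simp only; omega
    have hj_succ : j + 1 = 0 := by
      ext; rw [Fin.val_add, Fin.val_one', Nat.add_mod_mod, hj_eq, Nat.mod_self, Fin.val_zero]
    rw [hj_succ, hj_last, hcyc]

theorem CyclicFeasibleSeqM.feasibleSeqM {σ : Fin n ≃ Fin n} (hσ : CyclicFeasibleSeqM p σ) :
    FeasibleSeqM m n p σ := by
  intro i hi j hj
  rw [hσ i hi j, Fin.mk_add_one_eq_add_one hj]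

theorem CyclicFeasibleSeqM.rotate {σ : Fin n ≃ Fin n} (hσ : CyclicFeasibleSeqM p σ) (k : Fin n) :
    CyclicFeasibleSeqM p ((Equiv.addRight k).trans σ) := by
  intro i hi j
  simpa only [Equiv.trans_apply, Equiv.coe_addRight, add_right_comm j 1 k] using hσ i hi (j + k)

theorem CyclicFeasibleSeqM.exists_feasibleSeqM_head_eq {σ : Fin n ≃ Fin n}
    (hσ : CyclicFeasibleSeqM p σ) (k : Fin n) :
    ∃ τ : Fin n ≃ Fin n, FeasibleSeqM m n p τ ∧ τ 0 = k :=
  ⟨(Equiv.addRight (σ.symm k)).trans σ, (hσ.rotate _).feasibleSeqM, by simp⟩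

end CyclicFeasibility

/-- if a feasible sequence `σ` of an m-machine instance satisfies
`p i (σ 0) = p (i+1) (σ (n-1))` for every `i` with `i+1 < m`, then there is a
feasible sequence `τ` whose first job minimizes `Σ_{i=0}^{m-2} p i (·)`, and `τ` is
optimal: its makespan `Σ_{i=0}^{m-2} p i (τ 0) + Σ_j p (m-1) j` is at most the
makespan of any feasible sequence `ρ`. -/
theorem stmt_14 (m n : ℕ) (hm : 2 ≤ m) (hn : 1 ≤ n)
    (p : Fin m → Fin n → ℕ)
    (σ : Fin n ≃ Fin n) (hσ : FeasibleSeqM m n p σ)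
    (hcyc : ∀ i : Fin m, ∀ hi : (i : ℕ) + 1 < m,
      p i (σ ⟨0, by omega⟩) = p ⟨(i : ℕ) + 1, hi⟩ (σ ⟨n - 1, by omega⟩)) :
    ∃ τ : Fin n ≃ Fin n, FeasibleSeqM m n p τ ∧
      (∀ k : Fin n,
        ∑ i ∈ Finset.univ.filter (fun i : Fin m => (i : ℕ) + 1 < m), p i (τ ⟨0, by omega⟩)
          ≤ ∑ i ∈ Finset.univ.filter (fun i : Fin m => (i : ℕ) + 1 < m), p i k) ∧
      (∀ ρ : Fin n ≃ Fin n, FeasibleSeqM m n p ρ →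
        (∑ i ∈ Finset.univ.filter (fun i : Fin m => (i : ℕ) + 1 < m), p i (τ ⟨0, by omega⟩))
            + ∑ j, p ⟨m - 1, by omega⟩ j
          ≤ (∑ i ∈ Finset.univ.filter (fun i : Fin m => (i : ℕ) + 1 < m), p i (ρ ⟨0, by omega⟩))
              + ∑ j, p ⟨m - 1, by omega⟩ j) := by
  have : NeZero n := ⟨by omega⟩
  obtain ⟨k, -, hk_min⟩ := Finset.exists_min_image Finset.univ
    (fun k : Fin n => ∑ i ∈ Finset.univ.filter (fun i : Fin m => (i : ℕ) + 1 < m), p i k)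
    Finset.univ_nonempty
  obtain ⟨τ, hτ, hτ_head⟩ :=
    (cyclicFeasibleSeqM_of_feasibleSeqM hσ hcyc).exists_feasibleSeqM_head_eq k
  refine ⟨τ, hτ, fun k' => ?_, fun ρ _ => ?_⟩
  · exact hτ_head ▸ hk_min k' (Finset.mem_univ _)
  · exact Nat.add_le_add_right (hτ_head ▸ hk_min _ (Finset.mem_univ _)) _
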